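/- arXiv:1708.02341 — 2 statements merged into one kernel-verified Lean document; each statement's English description precedes it below -/
import Mathlib

section
/- Let f : [t₀, 0] → ℝ be a differentiable function with f(0) ≤ C₁ and suppose that for every t ∈ [t₀, 0], if f(t) > 2·|t|^{1/2} then f'(t) ≥ -4(C+1)·|t|^{-1/2}. Then f(t₀) ≤ C₂·|t₀|^{1/2} + C₁, where C₂ = 8(C+1) + 2. -/
/- STATEMENT 0: Integrating the distance-distortion differential inequality:
if f is differentiable on [t₀,0], f(0) ≤ C₁, and f'(t) ≥ -4(C+1)|t|^{-1/2}
whenever f(t) > 2|t|^{1/2}, then f(t₀) ≤ C₂|t₀|^{1/2} + C₁ with C₂ = 8(C+1)+2. -/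
theorem distance_distortion_integrated
    (C C₁ t₀ : ℝ) (hC : 0 < C) (hC₁ : 0 < C₁) (ht₀ : t₀ < 0)
    (f f' : ℝ → ℝ)
    (hf : ∀ t ∈ Set.Icc t₀ 0, HasDerivAt f (f' t) t)
    (h0 : f 0 ≤ C₁)
    (hder : ∀ t ∈ Set.Icc t₀ 0, 2 * Real.sqrt |t| < f t →
      -4 * (C + 1) * (Real.sqrt |t|)⁻¹ ≤ f' t) :
    f t₀ ≤ (8 * (C + 1) + 2) * Real.sqrt |t₀| + C₁ := by
  set K : ℝ := 8 * (C + 1) + 2 with hK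
  have hK2 : (2:ℝ) ≤ K := by nlinarith
  set φ : ℝ → ℝ := fun t => K * Real.sqrt (-t) + C₁ with hφ
  -- |t| = -t on [t₀, 0]
  have habs : ∀ t ∈ Set.Icc t₀ (0:ℝ), |t| = -t := fun t ht => abs_of_nonpos ht.2
  by_contra hcon
  push_neg at hcon
  have hcon' : φ t₀ < f t₀ := by
    have := habs t₀ ⟨le_refl _, ht₀.le⟩
    simp only [hφ]
    rw [← this]; exact hcon
  -- continuity of f and φ on Icc t₀ 0
  have hfc : ContinuousOn f (Set.Icc t₀ 0) :=
    fun t ht => (hf t ht).continuousAt.continuousWithinAt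
  have hφc : Continuous φ := by
    exact ((continuous_const.mul (Real.continuous_sqrt.comp continuous_neg)).add continuous_const)
  -- the set where f ≤ φ
  set A : Set ℝ := Set.Icc t₀ 0 ∩ (fun t => f t - φ t) ⁻¹' Set.Iic 0 with hA
  have hAclosed : IsClosed A :=
    (hfc.sub hφc.continuousOn).preimage_isClosed_of_isClosed isClosed_Icc isClosed_Iic
  have h0A : (0:ℝ) ∈ A := by
    constructor
    · exact ⟨ht₀.le, le_refl _⟩
    · simp only [Set.mem_preimage, Set.mem_Iic, hφ, neg_zero, Real.sqrt_zero, mul_zero, zero_add]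
      linarith
  have hAbdd : BddBelow A := ⟨t₀, fun x hx => hx.1.1⟩
  set t₁ : ℝ := sInf A with ht₁
  have ht₁A : t₁ ∈ A := hAclosed.csInf_mem ⟨0, h0A⟩ hAbdd
  have ht₁0 : t₁ ≤ 0 := ht₁A.1.2
  have ht₀t₁ : t₀ < t₁ := by
    rcases lt_or_eq_of_le ht₁A.1.1 with h | h
    · exact h
    · exfalso
      have : f t₁ - φ t₁ ≤ 0 := ht₁A.2
      rw [← h] at this; linarith
  -- on [t₀, t₁), f > φ
  have hgt : ∀ t ∈ Set.Ico t₀ t₁, φ t < f t := by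
    intro t ht
    by_contra h
    push_neg at h
    have htA : t ∈ A := ⟨⟨ht.1, (lt_of_lt_of_le ht.2 ht₁0).le⟩, by
      simp only [Set.mem_preimage, Set.mem_Iic]; linarith⟩
    exact absurd (csInf_le hAbdd htA) (not_le.2 ht.2)
  -- f - φ is strictly monotone on [t₀, t₁]
  have hsub : Set.Icc t₀ t₁ ⊆ Set.Icc t₀ 0 :=
    Set.Icc_subset_Icc le_rfl ht₁0
  have hmono : StrictMonoOn (fun t => f t - φ t) (Set.Icc t₀ t₁) := by
    apply strictMonoOn_of_deriv_pos (convex_Icc t₀ t₁)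
    · exact (hfc.mono hsub).sub hφc.continuousOn
    · intro x hx
      rw [interior_Icc] at hx
      have hx0 : x < 0 := lt_of_lt_of_le hx.2 ht₁0
      have hxmem : x ∈ Set.Icc t₀ 0 := ⟨hx.1.le, hx0.le⟩
      have hnx : (0:ℝ) < -x := by linarith
      have hs : (0:ℝ) < Real.sqrt (-x) := Real.sqrt_pos.2 hnx
      -- derivative of φ at x
      have hdsqrt : HasDerivAt (fun t => Real.sqrt (-t)) (1 / (2 * Real.sqrt (-x)) * (-1)) x := by
        exact (Real.hasDerivAt_sqrt (ne_of_gt hnx)).comp x (hasDerivAt_neg x)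
      have hdφ : HasDerivAt φ (K * (1 / (2 * Real.sqrt (-x)) * (-1))) x :=
        (hdsqrt.const_mul K).add_const C₁
      have hdiff : HasDerivAt (fun t => f t - φ t)
          (f' x - K * (1 / (2 * Real.sqrt (-x)) * (-1))) x := (hf x hxmem).sub hdφ
      rw [hdiff.deriv]
      -- f x > φ x ≥ 2√(-x)
      have hfx : φ x < f x := hgt x ⟨hx.1.le, hx.2⟩
      have h2 : 2 * Real.sqrt |x| < f x := by
        rw [habs x hxmem]
        have : 2 * Real.sqrt (-x) ≤ K * Real.sqrt (-x) + C₁ := by nlinarith [hs.le]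
        calc 2 * Real.sqrt (-x) ≤ φ x := this
          _ < f x := hfx
      have hd := hder x hxmem h2
      rw [habs x hxmem] at hd
      have hinv : (Real.sqrt (-x))⁻¹ > 0 := inv_pos.2 hs
      have hK' : K * (1 / (2 * Real.sqrt (-x)) * (-1)) = -(K / 2) * (Real.sqrt (-x))⁻¹ := by
        field_simp
      rw [hK']
      have : f' x - -(K / 2) * (Real.sqrt (-x))⁻¹
          ≥ -4 * (C + 1) * (Real.sqrt (-x))⁻¹ + (K / 2) * (Real.sqrt (-x))⁻¹ := by linarith
      have h3 : -4 * (C + 1) * (Real.sqrt (-x))⁻¹ + (K / 2) * (Real.sqrt (-x))⁻¹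
          = (Real.sqrt (-x))⁻¹ := by rw [hK]; ring
      linarith [h3 ▸ this]
  have h1 : (fun t => f t - φ t) t₀ < (fun t => f t - φ t) t₁ :=
    hmono ⟨le_rfl, ht₀t₁.le⟩ ⟨ht₀t₁.le, le_rfl⟩ ht₀t₁
  have h2 : f t₁ - φ t₁ ≤ 0 := ht₁A.2
  simp only at h1
  linarith
end

section
/- Let φ : [a, 0] → ℝ be continuous on [a,0], differentiable on (a,0), with a < 0, and suppose φ'(t) ≥ -K|t|^{-1/2} for all t ∈ (a, 0) at which φ(t) > 2|t|^{1/2}. If φ(0) ≤ C₁ and φ is nonnegative, then φ(a) ≤ max(2|a|^{1/2}, C₁ + 2K|a|^{1/2}). -/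
/-!
Above the barrier `2 √|t|` the derivative bound says that `φ t - 2 K √|t|` is nondecreasing.
Integrate it from `a` to the first time `b` at which `φ` meets the barrier, or to `b = 0` if it
never does. In the second case `φ 0 ≤ C₁` gives `φ a ≤ C₁ + 2 K √|a|`; in the first,
`φ a ≤ 2 √|b| + 2 K (√|a| - √|b|)`, which is affine in `√|b| ∈ [0, √|a|]` and hence at most
`max (2 √|a|) (2 K √|a|)`.
-/

open Set

lemma hasDerivAt_sqrt_abs_of_neg {t : ℝ} (ht : t < 0) :
    HasDerivAt (fun t => √|t|) (-(2 * √|t|)⁻¹) t := by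
  convert (hasDerivAt_abs_neg ht).sqrt (abs_pos.2 ht.ne).ne' using 1
  rw [neg_div, one_div]

lemma le_add_two_mul_sqrt_abs_sub_of_deriv_ge {a b K : ℝ} (hab : a ≤ b) (hb : b ≤ 0)
    {φ φ' : ℝ → ℝ} (hcont : ContinuousOn φ (Icc a b))
    (hdiff : ∀ t ∈ Ioo a b, HasDerivAt φ (φ' t) t)
    (hineq : ∀ t ∈ Ioo a b, -K * (√|t|)⁻¹ ≤ φ' t) :
    φ a ≤ φ b + 2 * K * (√|a| - √|b|) := by
  set ψ : ℝ → ℝ := fun t => φ t - 2 * K * √|t|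
  have hψ_cont : ContinuousOn ψ (Icc a b) :=
    hcont.sub (continuous_const.mul continuous_abs.sqrt).continuousOn
  have hψ_deriv : ∀ t ∈ Ioo a b, HasDerivAt ψ (φ' t + K * (√|t|)⁻¹) t := by
    intro t ht
    refine ((hdiff t ht).sub
      ((hasDerivAt_sqrt_abs_of_neg (ht.2.trans_le hb)).const_mul (2 * K))).congr_deriv ?_
    rw [mul_inv]
    ring
  have hψ_mono : MonotoneOn ψ (Icc a b) := by
    refine monotoneOn_of_hasDerivWithinAt_nonneg (f' := fun t => φ' t + K * (√|t|)⁻¹)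
      (convex_Icc a b) hψ_cont (fun t ht => ?_) (fun t ht => ?_)
    · rw [interior_Icc] at ht ⊢
      exact (hψ_deriv t ht).hasDerivWithinAt
    · rw [interior_Icc] at ht
      linarith [hineq t ht]
  have := hψ_mono (left_mem_Icc.2 hab) (right_mem_Icc.2 hab) hab
  simp only [ψ] at this
  linarith

lemma exists_first_nonpos_or_eq_right {a c : ℝ} (hac : a < c) {g : ℝ → ℝ}
    (hg : ContinuousOn g (Icc a c)) (hga : 0 < g a) :
    ∃ b ∈ Ioc a c, (∀ t ∈ Ico a b, 0 < g t) ∧ (b = c ∨ g b ≤ 0) := by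
  by_cases hall : ∀ t ∈ Ico a c, 0 < g t
  · exact ⟨c, ⟨hac, le_rfl⟩, hall, Or.inl rfl⟩
  push Not at hall
  obtain ⟨t₀, ht₀, hgt₀⟩ := hall
  have hS_compact : IsCompact (Icc a c ∩ g ⁻¹' Iic 0) :=
    isCompact_Icc.of_isClosed_subset (hg.preimage_isClosed_of_isClosed isClosed_Icc isClosed_Iic)
      inter_subset_left
  obtain ⟨b, ⟨⟨hab, hbc⟩, hgb⟩, hb_min⟩ :=
    hS_compact.exists_isLeast ⟨t₀, Ico_subset_Icc_self ht₀, hgt₀⟩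
  refine ⟨b, ⟨hab.lt_of_ne ?_, hbc⟩, fun t ht => ?_, Or.inr hgb⟩
  · rintro rfl
    exact (not_le.2 hga) hgb
  · exact not_le.1 fun hgt => (hb_min ⟨⟨ht.1, ht.2.le.trans hbc⟩, hgt⟩).not_gt ht.2

lemma two_mul_add_two_mul_sub_le_max {r s K C : ℝ} (hs : 0 ≤ s) (hsr : s ≤ r) (hC : 0 ≤ C) :
    2 * s + 2 * K * (r - s) ≤ max (2 * r) (C + 2 * K * r) := by
  rcases le_or_gt K 1 with hK | hK
  · exact le_max_of_le_left (by nlinarith)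
  · exact le_max_of_le_right (by nlinarith)

theorem barrier_integration_general
    (a K C₁ : ℝ) (ha : a < 0) (hC₁ : 0 ≤ C₁)
    (φ φ' : ℝ → ℝ)
    (hcont : ContinuousOn φ (Set.Icc a 0))
    (hdiff : ∀ t ∈ Set.Ioo a 0, HasDerivAt φ (φ' t) t)
    (hineq : ∀ t ∈ Set.Ioo a 0, 2 * Real.sqrt |t| < φ t →
      -K * (Real.sqrt |t|)⁻¹ ≤ φ' t)
    (h0 : φ 0 ≤ C₁) :
    φ a ≤ max (2 * Real.sqrt |a|) (C₁ + 2 * K * Real.sqrt |a|) := by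
  rcases le_or_gt (φ a) (2 * √|a|) with hbelow | habove
  · exact le_max_of_le_left hbelow
  obtain ⟨b, ⟨hab, hb⟩, habove_on, hexit⟩ :=
    exists_first_nonpos_or_eq_right (g := fun t => φ t - 2 * √|t|) ha
      (hcont.sub (continuous_const.mul continuous_abs.sqrt).continuousOn) (by linarith)
  have hIoo : Ioo a b ⊆ Ioo a 0 := Ioo_subset_Ioo_right hb
  have hintegrated := le_add_two_mul_sqrt_abs_sub_of_deriv_ge hab.le hb
    (hcont.mono (Icc_subset_Icc_right hb)) (fun t ht => hdiff t (hIoo ht))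
    (fun t ht => hineq t (hIoo ht) (by linarith [habove_on t (Ioo_subset_Ico_self ht)]))
  rcases hexit with rfl | hmeet
  · refine le_max_of_le_right ?_
    simp only [abs_zero, Real.sqrt_zero, sub_zero] at hintegrated
    linarith
  · have hsr : √|b| ≤ √|a| := Real.sqrt_le_sqrt (abs_le_abs_of_nonpos hb hab.le)
    linarith [two_mul_add_two_mul_sub_le_max (Real.sqrt_nonneg |b|) hsr hC₁ (K := K)]

theorem barrier_integration
    (a K C₁ : ℝ) (ha : a < 0) (hK : 0 < K) (hC₁ : 0 ≤ C₁)
    (φ φ' : ℝ → ℝ)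
    (hcont : ContinuousOn φ (Set.Icc a 0))
    (hdiff : ∀ t ∈ Set.Ioo a 0, HasDerivAt φ (φ' t) t)
    (hineq : ∀ t ∈ Set.Ioo a 0, 2 * Real.sqrt |t| < φ t →
      -K * (Real.sqrt |t|)⁻¹ ≤ φ' t)
    (h0 : φ 0 ≤ C₁)
    (hnonneg : ∀ t ∈ Set.Icc a 0, 0 ≤ φ t) :
    φ a ≤ max (2 * Real.sqrt |a|) (C₁ + 2 * K * Real.sqrt |a|) :=
  barrier_integration_general a K C₁ ha hC₁ φ φ' hcont hdiff hineq h0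
end
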